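/- The reconstruction map from cell averages to polynomials is uniquely solvable: given M+1 adjacent intervals I_e = [x_{e−1/2}, x_{e+1/2}] with positive lengths and prescribed averages q_e, there exists a unique polynomial w of degree ≤ M such that (1/|I_e|)∫_{I_e} w dx = q_e for all e. -/
import Mathlib

open Polynomial intervalIntegral

noncomputable def antideriv (w : ℝ[X]) : ℝ[X] :=
  w.sum fun n a => C (a / (n + 1)) * X ^ (n + 1)

lemma derivative_antideriv (w : ℝ[X]) : derivative (antideriv w) = w := by
  unfold antideriv
  rw [Polynomial.sum, map_sum]
  conv_rhs => rw [← w.sum_C_mul_X_pow_eq]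
  rw [Polynomial.sum]
  refine Finset.sum_congr rfl fun n hn => ?_
  rw [derivative_C_mul_X_pow, Nat.add_sub_cancel]
  congr 1
  push_cast
  rw [div_mul_cancel₀]
  positivity

lemma natDegree_antideriv (w : ℝ[X]) : (antideriv w).natDegree ≤ w.natDegree + 1 := by
  unfold antideriv
  rw [Polynomial.sum]
  refine Polynomial.natDegree_sum_le_of_forall_le _ _ fun n hn => ?_
  refine le_trans (natDegree_C_mul_le _ _) ?_
  simpa using Nat.add_le_add_right (Polynomial.le_natDegree_of_mem_supp n hn) 1

lemma integral_eval (w : ℝ[X]) (a b : ℝ) :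
    ∫ t in a..b, w.eval t = (antideriv w).eval b - (antideriv w).eval a := by
  have hint : IntervalIntegrable (fun t => w.eval t) MeasureTheory.volume a b :=
    (Polynomial.continuous (p := w)).intervalIntegrable a b
  refine intervalIntegral.integral_eq_sub_of_hasDerivAt (f := fun t => (antideriv w).eval t) (fun t _ => ?_) hint
  have := (antideriv w).hasDerivAt t
  rwa [derivative_antideriv] at this

lemma key_inj (M : ℕ) (x : Fin (M + 2) → ℝ) (hx : StrictMono x) (w : ℝ[X])
    (hdeg : w.degree ≤ (M : WithBot ℕ))
    (h : ∀ e : Fin (M + 1), (∫ t in (x e.castSucc)..(x e.succ), w.eval t) = 0) :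
    w = 0 := by
  set W := antideriv w with hW
  set V := W - C (W.eval (x 0)) with hV
  have hVeval : ∀ n (hn : n < M + 2), V.eval (x ⟨n, hn⟩) = 0 := by
    intro n
    induction n with
    | zero => intro hn; simp [hV, show (⟨0, hn⟩ : Fin (M+2)) = 0 from rfl]
    | succ k ih =>
      intro hn
      have hk : k < M + 2 := Nat.lt_of_succ_lt hn
      have hk1 : k < M + 1 := Nat.lt_of_succ_lt_succ hn
      have he := h ⟨k, hk1⟩
      rw [integral_eval] at he
      have hc : (⟨k, hk1⟩ : Fin (M+1)).castSucc = ⟨k, hk⟩ := rfl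
      have hs : (⟨k, hk1⟩ : Fin (M+1)).succ = ⟨k+1, hn⟩ := rfl
      rw [hc, hs] at he
      have : V.eval (x ⟨k+1, hn⟩) = V.eval (x ⟨k, hk⟩) := by
        simp only [hV, eval_sub, eval_C]
        linarith
      rw [this, ih hk]
  have hVdeg : V.natDegree < M + 2 := by
    have h1 : V.natDegree ≤ max W.natDegree (C (W.eval (x 0))).natDegree :=
      natDegree_sub_le _ _
    have h2 : W.natDegree ≤ w.natDegree + 1 := natDegree_antideriv w
    have h3 : w.natDegree ≤ M := natDegree_le_iff_degree_le.mpr hdeg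
    have h4 : (C (W.eval (x 0))).natDegree = 0 := natDegree_C _
    omega
  have hV0 : V = 0 := by
    refine Polynomial.eq_zero_of_natDegree_lt_card_of_eval_eq_zero V hx.injective
      (fun i => ?_) (by simpa using hVdeg)
    have := hVeval i.1 i.2
    simpa using this
  have : derivative V = w := by
    rw [hV, derivative_sub, derivative_C, sub_zero, hW, derivative_antideriv]
  rw [← this, hV0, derivative_zero]

/-- Reconstruction from cell averages: given `M+1` consecutive intervals with
positive lengths and prescribed averages, there is a unique polynomial of degree
≤ M attaining these averages. -/
theorem stmt5 (M : ℕ) (x : Fin (M + 2) → ℝ) (hx : StrictMono x)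
    (q : Fin (M + 1) → ℝ) :
    ∃! w : Polynomial ℝ,
      w.degree ≤ (M : WithBot ℕ) ∧
      ∀ e : Fin (M + 1),
        (1 / (x e.succ - x e.castSucc)) *
          (∫ t in (x e.castSucc)..(x e.succ), w.eval t) = q e := by
  have hlen : ∀ e : Fin (M + 1), x e.castSucc < x e.succ := fun e =>
    hx (by simp [Fin.lt_def])
  have hne : ∀ e : Fin (M + 1), x e.succ - x e.castSucc ≠ 0 := fun e =>
    sub_ne_zero.mpr (hlen e).ne'
  -- linear map from polynomials to integrals
  let L : ℝ[X] →ₗ[ℝ] (Fin (M + 1) → ℝ) :=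
    { toFun := fun w e => ∫ t in (x e.castSucc)..(x e.succ), w.eval t
      map_add' := fun w₁ w₂ => by
        funext e
        simp only [eval_add]
        exact intervalIntegral.integral_add
          ((Polynomial.continuous (p := w₁)).intervalIntegrable _ _)
          ((Polynomial.continuous (p := w₂)).intervalIntegrable _ _)
      map_smul' := fun c w => by
        funext e
        simp only [eval_smul, smul_eq_mul, RingHom.id_apply, Pi.smul_apply]
        rw [intervalIntegral.integral_const_mul] }
  -- restrict to degreeLT
  let L' : degreeLT ℝ (M + 1) →ₗ[ℝ] (Fin (M + 1) → ℝ) :=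
    L.comp (Submodule.subtype _)
  have hdeg_iff : ∀ w : ℝ[X], w ∈ degreeLT ℝ (M + 1) ↔ w.degree ≤ (M : WithBot ℕ) := by
    intro w
    rw [mem_degreeLT]
    constructor
    · intro hlt
      cases hd : w.degree with
      | bot => simp [hd]
      | coe n =>
        rw [hd, Nat.cast_withBot] at hlt
        have h1 : n < M + 1 := WithBot.coe_lt_coe.mp hlt
        have h2 : n ≤ M := Nat.lt_succ_iff.mp h1
        rw [Nat.cast_withBot]
        exact WithBot.coe_le_coe.mpr h2
    · intro hle
      calc w.degree ≤ (M : WithBot ℕ) := hle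
        _ < ((M + 1 : ℕ) : WithBot ℕ) := by exact_mod_cast Nat.lt_succ_self M
  have hinj : Function.Injective L' := by
    rw [← LinearMap.ker_eq_bot, Submodule.eq_bot_iff]
    rintro ⟨w, hw⟩ hwk
    have hz : ∀ e : Fin (M + 1), (∫ t in (x e.castSucc)..(x e.succ), w.eval t) = 0 := by
      intro e
      exact congrFun (hwk : _) e
    have := key_inj M x hx w ((hdeg_iff w).mp hw) hz
    simpa using this
  -- make it an endomorphism
  let f : (Fin (M + 1) → ℝ) →ₗ[ℝ] (Fin (M + 1) → ℝ) :=
    L'.comp (degreeLTEquiv ℝ (M + 1)).symm.toLinearMap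
  have hfinj : Function.Injective f :=
    hinj.comp (degreeLTEquiv ℝ (M + 1)).symm.injective
  have hfsurj : Function.Surjective f := (LinearMap.injective_iff_surjective).mp hfinj
  obtain ⟨v, hv⟩ := hfsurj (fun e => (x e.succ - x e.castSucc) * q e)
  set w := ((degreeLTEquiv ℝ (M + 1)).symm v : degreeLT ℝ (M + 1))
  refine ⟨(w : ℝ[X]), ⟨(hdeg_iff _).mp w.2, fun e => ?_⟩, ?_⟩
  · have : (∫ t in (x e.castSucc)..(x e.succ), (w : ℝ[X]).eval t)
        = (x e.succ - x e.castSucc) * q e := congrFun hv e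
    rw [this, one_div, inv_mul_eq_div]
    exact mul_div_cancel_left₀ _ (hne e)
  · rintro w' ⟨hw'deg, hw'⟩
    have hdiff : (w' - (w : ℝ[X])) = 0 := by
      refine key_inj M x hx _ ?_ ?_
      · exact le_trans (degree_sub_le _ _) (max_le hw'deg ((hdeg_iff _).mp w.2))
      · intro e
        have h1 : (∫ t in (x e.castSucc)..(x e.succ), w'.eval t)
            = (x e.succ - x e.castSucc) * q e := by
          have h := hw' e
          rw [one_div, inv_mul_eq_div, div_eq_iff (hne e)] at h
          rw [mul_comm]
          exact h
        have h2 : (∫ t in (x e.castSucc)..(x e.succ), (w : ℝ[X]).eval t)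
            = (x e.succ - x e.castSucc) * q e := congrFun hv e
        have : (∫ t in (x e.castSucc)..(x e.succ), (w'.eval t - (w : ℝ[X]).eval t))
            = 0 := by
          rw [intervalIntegral.integral_sub
            ((Polynomial.continuous (p := w')).intervalIntegrable _ _)
            ((Polynomial.continuous (p := (w : ℝ[X]))).intervalIntegrable _ _), h1, h2, sub_self]
        simpa [eval_sub] using this
    exact sub_eq_zero.mp hdiff
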